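/- Under the same setup (X̃₁,X̃₂,X̃₃ with equal pairwise adjacent correlations ρ̃, Cov(X̃₁,X̃₃) = Cov(X̃₁,X̃₂)Cov(X̃₂,X̃₃)/Var(X̃₂), and X₂ = X̃₂ + E₂ with measurement error of relative standard deviation γ > 0), the partial correlation between X̃₁ and X̃₃ given X₂, defined as (ρ₁₃ − ρ₁₂ρ₂₃)/(√(1−ρ₁₂²)·√(1−ρ₂₃²)) where ρ₁₂, ρ₂₃, ρ₁₃ are the correlations among X̃₁, X₂, X̃₃, equals γ²ρ̃²/(1 + γ² − ρ̃²). -/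

import Mathlib

/-! Attenuating the middle correlations to `ρ̃/√(1+γ²)` leaves the product `ρ₁₂ρ₂₃ = ρ̃²/(1+γ²)`, so
the numerator of the partial correlation becomes `ρ̃²γ²/(1+γ²)`; with equal adjacent correlations the
two square roots in the denominator multiply to `1 − ρ̃²/(1+γ²) = (1+γ²−ρ̃²)/(1+γ²)`. -/

noncomputable def partialCorr (ρ12 ρ23 ρ13 : ℝ) : ℝ :=
  (ρ13 - ρ12 * ρ23) / (Real.sqrt (1 - ρ12 ^ 2) * Real.sqrt (1 - ρ23 ^ 2))

theorem partialCorr_self {r c : ℝ} (hr : r ^ 2 ≤ 1) :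
    partialCorr r r c = (c - r ^ 2) / (1 - r ^ 2) := by
  rw [partialCorr, Real.mul_self_sqrt (sub_nonneg.mpr hr), sq]

theorem div_sqrt_sq {a s : ℝ} (hs : 0 ≤ s) : (a / Real.sqrt s) ^ 2 = a ^ 2 / s := by
  rw [div_pow, Real.sq_sqrt hs]

theorem partial_corr_with_measurement_error_general
    (ρ γ : ℝ) (hρ1 : ρ ^ 2 < 1)
    (ρ12 ρ23 ρ13 : ℝ)
    (h12 : ρ12 = ρ / Real.sqrt (1 + γ ^ 2))
    (h23 : ρ23 = ρ / Real.sqrt (1 + γ ^ 2))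
    (h13 : ρ13 = ρ ^ 2) :
    (ρ13 - ρ12 * ρ23) / (Real.sqrt (1 - ρ12 ^ 2) * Real.sqrt (1 - ρ23 ^ 2))
      = γ ^ 2 * ρ ^ 2 / (1 + γ ^ 2 - ρ ^ 2) := by
  have hs : 0 < 1 + γ ^ 2 := by positivity
  have hgap : 0 < 1 + γ ^ 2 - ρ ^ 2 := by nlinarith [sq_nonneg γ]
  have hr : ρ12 ^ 2 = ρ ^ 2 / (1 + γ ^ 2) := h12 ▸ div_sqrt_sq hs.le
  have hr_le : ρ12 ^ 2 ≤ 1 := by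
    rw [hr, div_le_one hs]; linarith
  obtain rfl : ρ23 = ρ12 := h23.trans h12.symm
  change partialCorr _ _ ρ13 = _
  rw [partialCorr_self hr_le, hr, h13]
  field_simp
  ring

/-- with `ρ₁₂ = ρ₂₃ = ρ̃/√(1+γ²)` and `ρ₁₃ = ρ̃²`, the partial
correlation of variables 1 and 3 given the contaminated variable 2, defined as
`(ρ₁₃ − ρ₁₂ρ₂₃)/(√(1−ρ₁₂²)·√(1−ρ₂₃²))`, equals `γ²ρ̃²/(1 + γ² − ρ̃²)`. -/
theorem partial_corr_with_measurement_error
    (ρ γ : ℝ) (hρ : 0 < ρ ^ 2) (hρ1 : ρ ^ 2 < 1) (hγ : 0 < γ)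
    (ρ12 ρ23 ρ13 : ℝ)
    (h12 : ρ12 = ρ / Real.sqrt (1 + γ ^ 2))
    (h23 : ρ23 = ρ / Real.sqrt (1 + γ ^ 2))
    (h13 : ρ13 = ρ ^ 2) :
    (ρ13 - ρ12 * ρ23) / (Real.sqrt (1 - ρ12 ^ 2) * Real.sqrt (1 - ρ23 ^ 2))
      = γ ^ 2 * ρ ^ 2 / (1 + γ ^ 2 - ρ ^ 2) :=
  partial_corr_with_measurement_error_general ρ γ hρ1 ρ12 ρ23 ρ13 h12 h23 h13
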